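/- For every permutation w of the positive integers with only finitely many non-fixed points, the bottom pipe dream B_w = {(i,j) : 1 ≤ j ≤ code(w)_i} is a pipe dream of w. -/

import Mathlib

/-- The simple transposition corresponding to the cell `(i, j)`, namely
`s_{i+j-1}`, swapping `i+j-1` and `i+j` (as a permutation of the positive integers). -/
def cellTrans (p : ℕ+ × ℕ+) : Equiv.Perm ℕ+ :=
  Equiv.swap (p.1 + p.2 - 1) (p.1 + p.2)

/-- Key used to order cells: rows increasing, and within a row, columns decreasing. -/
def cellKey (p : ℕ+ × ℕ+) : Lex (ℕ+ × ℕ+ᵒᵈ) :=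
  toLex (p.1, OrderDual.toDual p.2)

/-- The product of the simple transpositions `s_{i+j-1}` over the cells `(i,j)` of `D`,
taken with `i` increasing and, for fixed `i`, `j` decreasing. -/
def pdWord (D : Finset (ℕ+ × ℕ+)) : Equiv.Perm ℕ+ :=
  (((D.image cellKey).sort (· ≤ ·)).map
    (fun q => cellTrans ((ofLex q).1, OrderDual.ofDual (ofLex q).2))).prod

/-- The number of inversions of a permutation of the positive integers. -/
noncomputable def invNum (w : Equiv.Perm ℕ+) : ℕ :=
  Set.ncard {p : ℕ+ × ℕ+ | p.1 < p.2 ∧ w p.2 < w p.1}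

/-- `D` is a pipe dream (RC-graph) of `w`. -/
def IsPipeDream (w : Equiv.Perm ℕ+) (D : Finset (ℕ+ × ℕ+)) : Prop :=
  D.card = invNum w ∧ pdWord D = w

/-- The number of pipe dreams of `w`. -/
noncomputable def nu (w : Equiv.Perm ℕ+) : ℕ :=
  Set.ncard {D : Finset (ℕ+ × ℕ+) | IsPipeDream w D}

/-- The number of occurrences of the pattern 132 in `w`. -/
noncomputable def p132 (w : Equiv.Perm ℕ+) : ℕ :=
  Set.ncard {t : ℕ+ × ℕ+ × ℕ+ |
    t.1 < t.2.1 ∧ t.2.1 < t.2.2 ∧ w t.1 < w t.2.2 ∧ w t.2.2 < w t.2.1}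

/-- The number of occurrences of the pattern 1432 in `w`. -/
noncomputable def p1432 (w : Equiv.Perm ℕ+) : ℕ :=
  Set.ncard {t : ℕ+ × ℕ+ × ℕ+ × ℕ+ |
    t.1 < t.2.1 ∧ t.2.1 < t.2.2.1 ∧ t.2.2.1 < t.2.2.2 ∧
    w t.1 < w t.2.2.2 ∧ w t.2.2.2 < w t.2.2.1 ∧ w t.2.2.1 < w t.2.1}

/-- `w` avoids the pattern 1432. -/
def Avoids1432 (w : Equiv.Perm ℕ+) : Prop :=
  ¬ ∃ a b c d : ℕ+, a < b ∧ b < c ∧ c < d ∧ w a < w d ∧ w d < w c ∧ w c < w b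

/-- The Rothe diagram of `w`. -/
def RD (w : Equiv.Perm ℕ+) : Set (ℕ+ × ℕ+) :=
  {p | p.2 < w p.1 ∧ p.1 < w⁻¹ p.2}

/-- The Lehmer code of `w`: `code(w)_i = #{j > i : w(j) < w(i)}`. -/
noncomputable def lehmer (w : Equiv.Perm ℕ+) (i : ℕ+) : ℕ :=
  Set.ncard {j : ℕ+ | i < j ∧ w j < w i}

/-- The bottom pipe dream `B_w = {(i,j) : 1 ≤ j ≤ code(w)_i}` (as a set of cells). -/
def bottomSet (w : Equiv.Perm ℕ+) : Set (ℕ+ × ℕ+) :=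
  {p | (p.2 : ℕ) ≤ lehmer w p.1}

/-- The top pipe dream `T_w = {(i,j) : 1 ≤ i ≤ code(w⁻¹)_j}` (as a set of cells). -/
def topSet (w : Equiv.Perm ℕ+) : Set (ℕ+ × ℕ+) :=
  {p | (p.1 : ℕ) ≤ lehmer w⁻¹ p.2}

/-- `α(S)_m`: the number of cells of `S` on the diagonal `{(i,j) : i + j - 1 = m}`. -/
noncomputable def diagCount (S : Set (ℕ+ × ℕ+)) : ℕ+ → ℕ :=
  fun m => Set.ncard {p | p ∈ S ∧ p.1 + p.2 = m + 1}

/-- Ladder move of order `k` taking `D` to `D'`: writing `i = i₀ + k + 1` (so `i₀ = i - k - 1`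
and automatically `i ≥ k + 2`), it requires `(i,j) ∈ D`, `(i,j+1) ∉ D`, `(i₀,j) ∉ D`,
`(i₀,j+1) ∉ D`, and `(i',j), (i',j+1) ∈ D` for all `i - k ≤ i' < i`; it removes `(i,j)` and
adds `(i₀, j+1)`. -/
def LadderMove (k : ℕ) (D D' : Finset (ℕ+ × ℕ+)) : Prop :=
  ∃ i₀ j : ℕ+,
    (i₀ + k.succPNat, j) ∈ D ∧
    (i₀ + k.succPNat, j + 1) ∉ D ∧
    (i₀, j) ∉ D ∧
    (i₀, j + 1) ∉ D ∧
    (∀ i' : ℕ+, i₀ < i' → i' < i₀ + k.succPNat → (i', j) ∈ D ∧ (i', j + 1) ∈ D) ∧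
    D' = insert (i₀, j + 1) (D.erase (i₀ + k.succPNat, j))

/-!
Read the bottom pipe dream row by row. If `w` fixes every `x < a`, then `w a = a + c` with
`c = code(w)_a`, and row `a` of `B_w` has the word `s_{a+c-1} ⋯ s_a`, the cycle `ρ` that sends
`a ↦ a + c` and preserves the relative order of all other points. So `u = ρ⁻¹ w` fixes every
`x ≤ a` and has the same code as `w` in the rows after `a`: `B_w` is row `a` followed by `B_u`,
and `w = ρ u` is the word of `B_w` by induction on `a`, which stops once `a` passes the support
of `w`. The cardinality is a separate count: row `i` of `B_w` and the inversions `(i, j)` of `w`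
both number `code(w)_i`.
-/

open Equiv

theorem PNat.ncard_Ico (a b : ℕ+) : (Set.Ico a b).ncard = b - a := by
  rw [← Finset.coe_Ico, Set.ncard_coe_finset, PNat.card_Ico]

theorem PNat.setOf_coe_le_eq_Ico (n : ℕ) : {j : ℕ+ | (j : ℕ) ≤ n} = Set.Ico 1 n.succPNat := by
  ext j
  simp [← PNat.coe_lt_coe]

theorem Finset.sort_union_of_forall_lt {α : Type*} [LinearOrder α] {s t : Finset α}
    (h : ∀ a ∈ s, ∀ b ∈ t, a < b) :
    (s ∪ t).sort (· ≤ ·) = s.sort (· ≤ ·) ++ t.sort (· ≤ ·) := by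
  have h' : ∀ a ∈ s.sort (· ≤ ·), ∀ b ∈ t.sort (· ≤ ·), a < b := fun a ha b hb =>
    h a ((mem_sort _).mp ha) b ((mem_sort _).mp hb)
  refine List.Perm.eq_of_pairwise' (pairwise_sort _ _)
    (List.pairwise_append.mpr
      ⟨pairwise_sort _ _, pairwise_sort _ _, fun a ha b hb => (h' a ha b hb).le⟩)
    (List.perm_of_nodup_nodup_toFinset_eq (sort_nodup _ _) ?_ (by simp [sort_toFinset]))
  exact List.nodup_append.mpr
    ⟨sort_nodup _ _, sort_nodup _ _, fun a ha b hb => (h' a ha b hb).ne⟩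

theorem pdWord_empty : pdWord ∅ = 1 := by
  simp [pdWord]

theorem pdWord_union {A B : Finset (ℕ+ × ℕ+)} (h : ∀ p ∈ A, ∀ q ∈ B, cellKey p < cellKey q) :
    pdWord (A ∪ B) = pdWord A * pdWord B := by
  unfold pdWord
  rw [Finset.image_union, Finset.sort_union_of_forall_lt, List.map_append, List.prod_append]
  simp only [Finset.mem_image]
  rintro _ ⟨p, hp, rfl⟩ _ ⟨q, hq, rfl⟩
  exact h p hp q hq

theorem pdWord_singleton (p : ℕ+ × ℕ+) : pdWord {p} = cellTrans p := by
  simp [pdWord, cellKey]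

def rowCells (a : ℕ+) (c : ℕ) : Finset (ℕ+ × ℕ+) :=
  (Finset.range c).image fun k => (a, k.succPNat)

theorem mem_rowCells {a : ℕ+} {c : ℕ} {p : ℕ+ × ℕ+} :
    p ∈ rowCells a c ↔ p.1 = a ∧ (p.2 : ℕ) ≤ c := by
  obtain ⟨i, j⟩ := p
  simp only [rowCells, Finset.mem_image, Finset.mem_range, Prod.mk.injEq]
  constructor
  · rintro ⟨k, hk, rfl, rfl⟩
    exact ⟨rfl, hk⟩
  · rintro ⟨rfl, hj⟩
    exact ⟨j.natPred, Nat.sub_one_lt_of_le j.pos hj, rfl, j.succPNat_natPred⟩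

theorem rowCells_succ (a : ℕ+) (c : ℕ) :
    rowCells a (c + 1) = {(a, c.succPNat)} ∪ rowCells a c := by
  ext p
  simp only [Finset.mem_union, Finset.mem_singleton, mem_rowCells, Prod.ext_iff,
    ← PNat.coe_inj, Nat.succPNat_coe]
  omega

def rowCycle (a : ℕ+) : ℕ → Perm ℕ+
  | 0 => 1
  | c + 1 => cellTrans (a, c.succPNat) * rowCycle a c

theorem pdWord_rowCells (a : ℕ+) (c : ℕ) : pdWord (rowCells a c) = rowCycle a c := by
  induction c with
  | zero => simp [rowCells, pdWord_empty, rowCycle]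
  | succ c ih =>
    rw [rowCells_succ, pdWord_union, pdWord_singleton, ih, rowCycle]
    rintro p hp q hq
    rw [Finset.mem_singleton.mp hp, cellKey, cellKey, (mem_rowCells.mp hq).1,
      Prod.Lex.toLex_lt_toLex]
    refine Or.inr ⟨rfl, OrderDual.toDual_lt_toDual.mpr ?_⟩
    have := (mem_rowCells.mp hq).2
    rw [← PNat.coe_lt_coe, Nat.succPNat_coe]
    omega

theorem coe_cellTrans_apply (a : ℕ+) (c : ℕ) (x : ℕ+) :
    (cellTrans (a, c.succPNat) x : ℕ) =
      if (x : ℕ) = a + c then a + c + 1 else if (x : ℕ) = a + c + 1 then a + c else x := by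
  have h₁ : ((a + c.succPNat - 1 : ℕ+) : ℕ) = a + c := by
    have : 1 < a + c.succPNat := by have := a.pos; simp [← PNat.coe_lt_coe]; omega
    simp [PNat.sub_coe, this]
  have h₂ : ((a + c.succPNat : ℕ+) : ℕ) = a + c + 1 := by simp [add_assoc]
  simp only [cellTrans, Equiv.swap_apply_def, ← PNat.coe_inj, h₁, h₂]
  split_ifs <;> simp only [h₁, h₂]

theorem coe_rowCycle_apply (a : ℕ+) (c : ℕ) (x : ℕ+) :
    (rowCycle a c x : ℕ) =
      if (x : ℕ) = a then a + c else if (a : ℕ) < x ∧ (x : ℕ) ≤ a + c then x - 1 else x := by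
  induction c with
  | zero => rw [rowCycle, Perm.one_apply]; split_ifs <;> omega
  | succ c ih =>
    rw [rowCycle, Perm.mul_apply, coe_cellTrans_apply, ih]
    split_ifs <;> omega

theorem rowCycle_lt_rowCycle_iff {a x y : ℕ+} {c : ℕ} (hx : x ≠ a) (hy : y ≠ a) :
    rowCycle a c x < rowCycle a c y ↔ x < y := by
  have hx' : (x : ℕ) ≠ a := PNat.coe_injective.ne hx
  have hy' : (y : ℕ) ≠ a := PNat.coe_injective.ne hy
  rw [← PNat.coe_lt_coe, ← PNat.coe_lt_coe, coe_rowCycle_apply, coe_rowCycle_apply]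
  split_ifs <;> omega

theorem coe_rowCycle_apply_self (a : ℕ+) (c : ℕ) : (rowCycle a c a : ℕ) = a + c := by
  simp [coe_rowCycle_apply]

theorem rowCycle_apply_eq_self {a x : ℕ+} {c : ℕ} (h : x < a ∨ (a : ℕ) + c < x) :
    rowCycle a c x = x := by
  rw [← PNat.coe_lt_coe] at h
  apply PNat.coe_injective
  rw [coe_rowCycle_apply]
  split_ifs <;> omega

section FixedPoints

variable {w : Perm ℕ+}

theorem le_apply_of_forall_lt_apply_eq {i : ℕ+} (h : ∀ x < i, w x = x) : i ≤ w i := by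
  by_contra! hlt
  exact hlt.ne (w.injective (h _ hlt))

theorem apply_lt_of_forall_le_apply_eq {N a : ℕ+} (hN : ∀ x, N ≤ x → w x = x) (ha : a < N) :
    w a < N := by
  by_contra! h
  exact ha.not_ge (w.injective (hN _ h) ▸ h)

theorem lehmer_eq_of_forall_lt_apply_eq {i : ℕ+} (h : ∀ x < i, w x = x) :
    lehmer w i = w i - i := by
  rw [lehmer, ← Set.ncard_image_of_injective _ w.injective, ← PNat.ncard_Ico]
  congr 1
  ext y
  constructor
  · rintro ⟨j, ⟨hij, hj⟩, rfl⟩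
    refine ⟨?_, hj⟩
    by_contra! hy
    exact hij.not_gt (w.injective (h _ hy) ▸ hy)
  · rintro ⟨hiy, hy⟩
    have hi : i ≤ w⁻¹ y := by
      by_contra! hlt
      have hfix : y = w⁻¹ y := by simpa using h _ hlt
      rw [← hfix] at hlt
      exact hlt.not_ge hiy
    have hne : w⁻¹ y ≠ i := by
      intro hyi
      simp [← hyi] at hy
    exact ⟨w⁻¹ y, ⟨lt_of_le_of_ne hi hne.symm, by simpa using hy⟩, by simp⟩

theorem coe_apply_eq_add_lehmer {i : ℕ+} (h : ∀ x < i, w x = x) :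
    (w i : ℕ) = i + lehmer w i := by
  have := PNat.coe_le_coe _ _ |>.mpr (le_apply_of_forall_lt_apply_eq h)
  rw [lehmer_eq_of_forall_lt_apply_eq h]
  omega

theorem lehmer_eq_zero_of_forall_le_apply_eq {i : ℕ+} (h : ∀ x ≤ i, w x = x) :
    lehmer w i = 0 := by
  rw [lehmer_eq_of_forall_lt_apply_eq fun x hx => h x hx.le, h i le_rfl, Nat.sub_self]

theorem le_fst_of_mem_bottomSet {a : ℕ+} (h : ∀ x < a, w x = x) {p : ℕ+ × ℕ+}
    (hp : p ∈ bottomSet w) : a ≤ p.1 := by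
  by_contra! hlt
  have hp' : (p.2 : ℕ) ≤ lehmer w p.1 := hp
  rw [lehmer_eq_zero_of_forall_le_apply_eq fun x hx => h x (hx.trans_lt hlt)] at hp'
  exact p.2.ne_zero (Nat.le_zero.mp hp')

end FixedPoints

theorem lehmer_mul_of_lt_iff {σ u : Perm ℕ+} {b i : ℕ+}
    (hσ : ∀ x y, x ≠ b → y ≠ b → (σ x < σ y ↔ x < y)) (hu : ∀ j, i ≤ j → u j ≠ b) :
    lehmer (σ * u) i = lehmer u i := by
  unfold lehmer
  congr 1
  ext j
  exact and_congr_right fun hij => hσ _ _ (hu j hij.le) (hu i le_rfl)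

noncomputable def peelRow (w : Perm ℕ+) (a : ℕ+) : Perm ℕ+ :=
  (rowCycle a (lehmer w a))⁻¹ * w

section PeelRow

variable {w : Perm ℕ+} {a : ℕ+}

theorem rowCycle_mul_peelRow : rowCycle a (lehmer w a) * peelRow w a = w :=
  mul_inv_cancel_left _ _

theorem peelRow_apply_of_le (hfix : ∀ x < a, w x = x) {x : ℕ+} (hx : x ≤ a) :
    peelRow w a x = x := by
  rw [peelRow, Perm.mul_apply, Perm.inv_eq_iff_eq]
  rcases hx.lt_or_eq with hx | rfl
  · rw [hfix x hx, rowCycle_apply_eq_self (Or.inl hx)]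
  · exact PNat.coe_injective (by rw [coe_rowCycle_apply_self, coe_apply_eq_add_lehmer hfix])

theorem peelRow_apply_of_ge (hfix : ∀ x < a, w x = x) {N : ℕ+} (hN : ∀ x, N ≤ x → w x = x)
    (ha : a < N) {x : ℕ+} (hx : N ≤ x) : peelRow w a x = x := by
  have hwa : (w a : ℕ) < x := lt_of_lt_of_le (apply_lt_of_forall_le_apply_eq hN ha) hx
  rw [peelRow, Perm.mul_apply, Perm.inv_eq_iff_eq, hN x hx,
    rowCycle_apply_eq_self (Or.inr (coe_apply_eq_add_lehmer hfix ▸ hwa))]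

theorem lehmer_peelRow_of_lt (hfix : ∀ x < a, w x = x) {i : ℕ+} (hi : a < i) :
    lehmer (peelRow w a) i = lehmer w i := by
  conv_rhs => rw [← rowCycle_mul_peelRow (w := w) (a := a)]
  refine (lehmer_mul_of_lt_iff (fun x y => rowCycle_lt_rowCycle_iff) fun j hij hj => ?_).symm
  exact (hi.trans_le hij).ne'
    ((peelRow w a).injective (hj.trans (peelRow_apply_of_le hfix le_rfl).symm))

theorem bottomSet_eq_rowCells_union_peelRow (hfix : ∀ x < a, w x = x) :
    bottomSet w = ↑(rowCells a (lehmer w a)) ∪ bottomSet (peelRow w a) := by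
  ext ⟨i, j⟩
  simp only [bottomSet, Set.mem_ofPred_eq, Set.mem_union, Finset.mem_coe, mem_rowCells]
  have hj := j.pos
  rcases lt_trichotomy i a with hi | rfl | hi
  · rw [lehmer_eq_zero_of_forall_le_apply_eq fun x hx => hfix x (hx.trans_lt hi),
      lehmer_eq_zero_of_forall_le_apply_eq fun x hx => peelRow_apply_of_le hfix (hx.trans hi.le)]
    simp [hi.ne]
  · rw [lehmer_eq_zero_of_forall_le_apply_eq fun x hx => peelRow_apply_of_le hfix hx]
    simp
  · rw [lehmer_peelRow_of_lt hfix hi]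
    simp [hi.ne']

end PeelRow

theorem exists_coe_eq_bottomSet_pdWord_eq {N : ℕ+} (w : Perm ℕ+) (a : ℕ+)
    (hfix : ∀ x < a, w x = x) (hN : ∀ x, N ≤ x → w x = x) :
    ∃ B : Finset (ℕ+ × ℕ+), (↑B : Set (ℕ+ × ℕ+)) = bottomSet w ∧ pdWord B = w := by
  by_cases hNa : N ≤ a
  · have hw : w = 1 :=
      Equiv.ext fun x => (lt_or_ge x a).elim (hfix x) fun hx => hN x (hNa.trans hx)
    subst hw
    refine ⟨∅, ?_, pdWord_empty⟩
    ext p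
    have : lehmer 1 p.1 = 0 := lehmer_eq_zero_of_forall_le_apply_eq fun _ _ => rfl
    simp [bottomSet, this]
  · replace hNa := not_le.mp hNa
    have hfix' : ∀ x < a + 1, peelRow w a x = x := fun x hx =>
      peelRow_apply_of_le hfix (PNat.lt_add_one_iff.mp hx)
    obtain ⟨B, hB, hword⟩ := exists_coe_eq_bottomSet_pdWord_eq (peelRow w a) (a + 1) hfix'
      (fun x hx => peelRow_apply_of_ge hfix hN hNa hx)
    refine ⟨rowCells a (lehmer w a) ∪ B, ?_, ?_⟩
    · rw [Finset.coe_union, hB, bottomSet_eq_rowCells_union_peelRow hfix]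
    · rw [pdWord_union, pdWord_rowCells, hword, rowCycle_mul_peelRow]
      intro p hp q hq
      have hrow : a < q.1 := PNat.add_one_le_iff.mp (le_fst_of_mem_bottomSet hfix' (hB ▸ hq))
      rw [cellKey, cellKey, (mem_rowCells.mp hp).1, Prod.Lex.toLex_lt_toLex]
      exact Or.inl hrow
termination_by (N : ℕ) - a
decreasing_by
  have := (PNat.coe_lt_coe _ _).mpr hNa
  rw [PNat.add_coe, PNat.one_coe]
  omega

theorem Set.ncard_eq_of_ncard_fiber_eq {α β : Type*} {s t : Set (α × β)}
    (hs : ∀ a, {b | (a, b) ∈ s}.Finite) (ht : ∀ a, {b | (a, b) ∈ t}.Finite)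
    (h : ∀ a, {b | (a, b) ∈ s}.ncard = {b | (a, b) ∈ t}.ncard) : s.ncard = t.ncard := by
  have e : ∀ a, {b | (a, b) ∈ s} ≃ {b | (a, b) ∈ t} := fun a =>
    have := (hs a).to_subtype
    have := (ht a).to_subtype
    (Finite.card_eq.mp (by simpa only [Nat.card_coe_set_eq] using h a)).some
  refine Set.ncard_congr (fun p hp => (p.1, (e p.1 ⟨p.2, hp⟩).1))
    (fun p hp => (e p.1 ⟨p.2, hp⟩).2) ?_
    fun q hq => ⟨(q.1, ((e q.1).symm ⟨q.2, hq⟩).1), ((e q.1).symm ⟨q.2, hq⟩).2, by simp⟩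
  rintro ⟨a, b⟩ ⟨a', b'⟩ hp hp' heq
  obtain ⟨rfl, hb⟩ := Prod.mk.inj heq
  simpa using (e a).injective (Subtype.ext hb)

theorem ncard_bottomSet (w : Perm ℕ+) : (bottomSet w).ncard = invNum w := by
  have row_eq (i : ℕ+) : {j | (i, j) ∈ bottomSet w} = Set.Ico 1 (lehmer w i).succPNat :=
    PNat.setOf_coe_le_eq_Ico (lehmer w i)
  refine Set.ncard_eq_of_ncard_fiber_eq (fun i => row_eq i ▸ Set.finite_Ico _ _)
    (fun i => ?_) (fun i => by rw [row_eq, PNat.ncard_Ico]; rfl)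
  exact ((Set.finite_Iio (w i)).preimage w.injective.injOn).subset fun j hj => hj.2

/-- the bottom pipe dream `B_w` is a pipe dream of `w`. -/
theorem bottom_is_pipe_dream (w : Equiv.Perm ℕ+)
    (hw : {x : ℕ+ | w x ≠ x}.Finite) :
    ∃ B : Finset (ℕ+ × ℕ+), (↑B : Set (ℕ+ × ℕ+)) = bottomSet w ∧ IsPipeDream w B := by
  obtain ⟨M, hM⟩ := hw.bddAbove
  have hN : ∀ x, M + 1 ≤ x → w x = x := fun x hx =>
    not_not.mp fun h => (PNat.add_one_le_iff.mp hx).not_ge (hM h)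
  obtain ⟨B, hB, hword⟩ :=
    exists_coe_eq_bottomSet_pdWord_eq w 1 (fun _ hx => (not_lt_one hx).elim) hN
  exact ⟨B, hB, by rw [← ncard_bottomSet, ← hB, Set.ncard_coe_finset], hword⟩
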